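/- arXiv:1806.02680 — 3 statements merged into one kernel-verified Lean document; each statement's English description precedes it below -/
import Mathlib

section
/- The number of a-parking functions of length n containing exactly k entries equal to 1 is C(n,k) times the number of (a+k-1)-parking functions of length n-k. -/
/-- The weakly increasing sorted version of a vector of naturals. -/
def sortPF {n : ℕ} (p : Fin n → ℕ) : List ℕ :=
  Multiset.sort (↑(List.ofFn p)) (· ≤ ·)

/-- `p` is an `a`-parking function of length `n`: all entries are positive and the
`i`-th entry (0-based) of the sorted version is at most `a + i` (i.e. `a + i - 1` 1-based). -/
def IsAPF (a : ℕ) {n : ℕ} (p : Fin n → ℕ) : Prop :=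
  (∀ i, 1 ≤ p i) ∧ ∀ i : Fin n, (sortPF p).getD i 0 ≤ a + (i : ℕ)

/-- `p` is an ordinary parking function of length `n`. -/
def IsPF {n : ℕ} (p : Fin n → ℕ) : Prop :=
  (∀ i, 1 ≤ p i ∧ p i ≤ n) ∧ ∀ i : Fin n, (sortPF p).getD i 0 ≤ (i : ℕ) + 1

/-!
Deleting the ones of `p` and lowering the other entries by one is undone by `insertOnes S e q`,
given the set `S` of positions of the ones and an enumeration `e` of its complement. The sorted
version of `insertOnes S e q` is `#S` ones followed by the sorted `q` shifted up by one, so the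
bound `a + i` on its `i`-th entry becomes, for `i = #S + j`, the bound `a + #S - 1 + j` on the
`j`-th entry of the sorted `q`, while the first `#S` bounds hold because `a ≥ 1`. Hence the
`a`-parking functions whose ones sit exactly at `S` correspond to the `(a + k - 1)`-parking
functions of length `n - k`, and there are `C(n, k)` choices of `S`.
-/

open Finset

theorem Multiset.sort_replicate_one_add_map_succ (k : ℕ) (s : Multiset ℕ) :
    (Multiset.replicate k 1 + s.map (· + 1)).sort = List.replicate k 1 ++ s.sort.map (· + 1) := by
  induction k with
  | zero => simpa using (s.map_sort (· + 1) (· ≤ ·) (· ≤ ·) fun a _ b _ => by simp).symm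
  | succ k ih =>
    rw [Multiset.replicate_succ, Multiset.cons_add, Multiset.sort_cons, ih, List.replicate_succ,
      List.cons_append]
    simp only [Multiset.mem_add, Multiset.mem_map]
    rintro b (hb | ⟨c, -, rfl⟩)
    · rw [Multiset.eq_of_mem_replicate hb]
    · omega

theorem List.forall_getD_replicate_one_append_le_iff {a : ℕ} (ha : 1 ≤ a) (k : ℕ)
    (l : List ℕ) :
    (∀ i, (List.replicate k 1 ++ l.map (· + 1)).getD i 0 ≤ a + i) ↔
      ∀ j, l.getD j 0 ≤ a + k - 1 + j := by
  have shifted (j : ℕ) : (List.replicate k 1 ++ l.map (· + 1)).getD (k + j) 0 ≤ a + (k + j) ↔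
      l.getD j 0 ≤ a + k - 1 + j := by
    have : (List.replicate k 1).length ≤ k + j := by simp
    simp only [List.getD_eq_getElem?_getD, List.getElem?_append_right this,
      List.length_replicate, Nat.add_sub_cancel_left, List.getElem?_map]
    rcases l[j]? with _ | x
    · simp
    · simp only [Option.map_some, Option.getD_some]; omega
  refine ⟨fun h j => (shifted j).1 (h _), fun h i => ?_⟩
  by_cases hik : i < k
  · have : i < (List.replicate k 1).length := by simpa
    simp only [List.getD_eq_getElem?_getD, List.getElem?_append_left this,
      List.getElem?_replicate, hik, if_true, Option.getD_some]
    omega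
  · obtain ⟨j, rfl⟩ := Nat.exists_eq_add_of_le (not_lt.1 hik)
    exact (shifted j).2 (h j)

theorem one_lt_of_notMem_filter_eq_one {ι : Type*} [Fintype ι] {p : ι → ℕ}
    (hp : ∀ i, 1 ≤ p i) {i : ι} (hi : i ∉ univ.filter (p · = 1)) : 1 < p i := by
  have := hp i
  simp only [mem_filter, mem_univ, true_and] at hi
  omega

section InsertOnes

variable {ι : Type*} [DecidableEq ι] {m : ℕ} (S : Finset ι) (e : {i // i ∉ S} ≃ Fin m)

def insertOnes (q : Fin m → ℕ) (i : ι) : ℕ :=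
  if h : i ∈ S then 1 else q (e ⟨i, h⟩) + 1

theorem insertOnes_of_mem (q : Fin m → ℕ) {i : ι} (hi : i ∈ S) : insertOnes S e q i = 1 :=
  dif_pos hi

theorem insertOnes_symm_apply (q : Fin m → ℕ) (j : Fin m) :
    insertOnes S e q (e.symm j) = q j + 1 := by
  simp [insertOnes, (e.symm j).2]

theorem insertOnes_pos (q : Fin m → ℕ) (i : ι) : 1 ≤ insertOnes S e q i := by
  unfold insertOnes; split <;> omega

variable [Fintype ι]

theorem filter_insertOnes_eq_one {q : Fin m → ℕ} (hq : ∀ j, 1 ≤ q j) :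
    univ.filter (insertOnes S e q · = 1) = S := by
  ext i
  by_cases hi : i ∈ S
  · simp [insertOnes, hi]
  · have := hq (e ⟨i, hi⟩)
    simp only [mem_filter, mem_univ, true_and, hi, iff_false]
    rw [insertOnes, dif_neg hi]
    omega

theorem insertOnes_sub_one {p : ι → ℕ} (hp : ∀ i, 1 ≤ p i)
    (hS : univ.filter (p · = 1) = S) :
    insertOnes S e (fun j => p (e.symm j) - 1) = p := by
  funext i
  by_cases hi : i ∈ S
  · rw [insertOnes_of_mem S e _ hi]
    rw [← hS] at hi
    exact ((mem_filter.1 hi).2).symm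
  · have := one_lt_of_notMem_filter_eq_one hp (hS ▸ hi)
    simp only [insertOnes, hi, dif_neg, not_false_eq_true, Equiv.symm_apply_apply]
    omega

theorem map_univ_insertOnes (q : Fin m → ℕ) :
    univ.val.map (insertOnes S e q) =
      Multiset.replicate S.card 1 + (univ.val.map q).map (· + 1) := by
  rw [← Multiset.filter_add_not (· ∈ S) univ.val, Multiset.map_add]
  congr 1
  · have : univ.val.filter (· ∈ S) = S.val := by rw [← filter_val]; simp
    rw [this, Multiset.map_congr rfl fun i => insertOnes_of_mem S e q, Multiset.map_const']
    rfl
  · rw [← filter_val, ← univ_val_map_subtype_val, Multiset.map_map,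
      ← Multiset.map_univ_val_equiv e.symm, Multiset.map_map, Multiset.map_map]
    congr 1
    funext j
    exact insertOnes_symm_apply S e q j

end InsertOnes

theorem sortPF_eq_sort {n : ℕ} (p : Fin n → ℕ) : sortPF p = (univ.val.map p).sort := by
  rw [sortPF, Fin.univ_val_map]

theorem isAPF_iff {a n : ℕ} (p : Fin n → ℕ) :
    IsAPF a p ↔ (∀ i, 1 ≤ p i) ∧ ∀ i : ℕ, (sortPF p).getD i 0 ≤ a + i := by
  refine and_congr_right fun _ => ⟨fun h i => ?_, fun h i => h i⟩
  by_cases hi : i < n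
  · exact h ⟨i, hi⟩
  · rw [List.getD_eq_default _ _ (by simpa [sortPF_eq_sort] using hi)]
    omega

variable {a n m : ℕ}

theorem sortPF_insertOnes (S : Finset (Fin n)) (e : {i // i ∉ S} ≃ Fin m) (q : Fin m → ℕ) :
    sortPF (insertOnes S e q) = List.replicate S.card 1 ++ (sortPF q).map (· + 1) := by
  rw [sortPF_eq_sort, map_univ_insertOnes, Multiset.sort_replicate_one_add_map_succ,
    sortPF_eq_sort]

theorem isAPF_insertOnes_iff (ha : 1 ≤ a) (S : Finset (Fin n)) (e : {i // i ∉ S} ≃ Fin m)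
    {q : Fin m → ℕ} (hq : ∀ j, 1 ≤ q j) :
    IsAPF a (insertOnes S e q) ↔ IsAPF (a + S.card - 1) q := by
  rw [isAPF_iff, isAPF_iff, sortPF_insertOnes,
    List.forall_getD_replicate_one_append_le_iff ha]
  exact and_congr (iff_of_true (insertOnes_pos S e q) hq) Iff.rfl

def onesFiberEquiv (ha : 1 ≤ a) (S : Finset (Fin n)) (e : {i // i ∉ S} ≃ Fin m) :
    {p : Fin n → ℕ // IsAPF a p ∧ univ.filter (p · = 1) = S} ≃
      {q : Fin m → ℕ // IsAPF (a + S.card - 1) q} where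
  toFun p := ⟨fun j => p.1 (e.symm j) - 1, by
    obtain ⟨p, hp, hS⟩ := p
    have hq (j : Fin m) : 1 ≤ p (e.symm j) - 1 := by
      have := one_lt_of_notMem_filter_eq_one hp.1 (by rw [hS]; exact (e.symm j).2)
      omega
    rw [← isAPF_insertOnes_iff ha S e hq, insertOnes_sub_one S e hp.1 hS]
    exact hp⟩
  invFun q := ⟨insertOnes S e q.1,
    (isAPF_insertOnes_iff ha S e q.2.1).2 q.2, filter_insertOnes_eq_one S e q.2.1⟩
  left_inv p := Subtype.ext (insertOnes_sub_one S e p.2.1.1 p.2.2)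
  right_inv q := Subtype.ext <| funext fun j => by
    simp [insertOnes_symm_apply]

def Equiv.subtypeAndEquivSigmaFiber {α β : Type*} (P : α → Prop) (Q : β → Prop) (f : α → β) :
    {x // P x ∧ Q (f x)} ≃ Σ y : Subtype Q, {x // P x ∧ f x = y} where
  toFun p := ⟨⟨_, p.2.2⟩, p.1, p.2.1, rfl⟩
  invFun x := ⟨x.2.1, x.2.2.1, by rw [x.2.2.2]; exact x.1.2⟩
  left_inv _ := rfl
  right_inv x := Sigma.subtype_ext (Subtype.ext x.2.2.2) rfl

theorem a_parking_with_k_ones_general (a n k : ℕ) (ha : 1 ≤ a) :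
    Nat.card {p : Fin n → ℕ //
        IsAPF a p ∧ (Finset.univ.filter fun i => p i = 1).card = k} =
      n.choose k * Nat.card {q : Fin (n - k) → ℕ // IsAPF (a + k - 1) q} := by
  have hcard (S : {S : Finset (Fin n) // S.card = k}) : Fintype.card {i // i ∉ S.1} = n - k := by
    rw [Fintype.card_subtype_compl, Fintype.card_coe, S.2, Fintype.card_fin]
  let fiberEquiv (S : {S : Finset (Fin n) // S.card = k}) :=
    (onesFiberEquiv ha S.1 (Fintype.equivFinOfCardEq (hcard S))).trans
      (Equiv.subtypeEquivRight fun q => by rw [S.2])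
  refine (Nat.card_congr ((Equiv.subtypeAndEquivSigmaFiber (IsAPF a) (·.card = k)
    fun p => univ.filter (p · = 1)).trans (Equiv.sigmaEquivProdOfEquiv fiberEquiv))).trans ?_
  rw [Nat.card_prod, Nat.card_eq_fintype_card, Fintype.card_finset_len, Fintype.card_fin]

/-- The number of `a`-parking functions of length `n` with exactly `k` entries equal
to `1` is `C(n,k)` times the number of `(a+k-1)`-parking functions of length `n-k`. -/
theorem a_parking_with_k_ones (a n k : ℕ) (ha : 1 ≤ a) (hk : k ≤ n) :
    Nat.card {p : Fin n → ℕ //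
        IsAPF a p ∧ (Finset.univ.filter fun i => p i = 1).card = k} =
      n.choose k * Nat.card {q : Fin (n - k) → ℕ // IsAPF (a + k - 1) q} :=
  a_parking_with_k_ones_general a n k ha
end

section
/- The polynomials P(n,a)(x) := Σ_{p ∈ P(n,a)} x^{Sum(p)} satisfy the recurrence P(n,a)(x) = x^n · Σ_{k=0}^{n} C(n,k) · P(n-k, a+k-1)(x), with P(0,a)(x)=1 and P(n,0)(x)=0 for n ≥ 1. -/
instance (a n : ℕ) : DecidablePred (fun p : Fin n → ℕ => IsAPF a p) :=
  fun p => decidable_of_iff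
    ((∀ i, 1 ≤ p i) ∧ ∀ i : Fin n, (sortPF p).getD i 0 ≤ a + (i : ℕ)) Iff.rfl

/-- The (finite) set of all `a`-parking functions of length `n`. -/
def pfFinset (a n : ℕ) : Finset (Fin n → ℕ) :=
  (Fintype.piFinset fun _ => Finset.Icc 1 (a + n)).filter (fun p => IsAPF a p)

/-- The generating polynomial of `a`-parking functions of length `n` by the sum
of the entries: `P(n,a)(x) = Σ_p x^(Sum p)`. -/
noncomputable def Ppoly (a n : ℕ) : Polynomial ℚ :=
  ∑ p ∈ pfFinset a n, Polynomial.X ^ (∑ i, p i)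

/-!
Classify an `a`-parking function `p` of length `n` by the set `S` of positions of its `1`'s.
Deleting these entries and lowering the others by one is, for `a ≥ 1`, a bijection onto the
pairs `(S, q)` with `#S = k` and `q` an `(a+k-1)`-parking function of length `n - k`: the sorted
version of `p` is `k` ones followed by the sorted version of `q + 1`, so the condition on `p` at
sorted position `k + j` is the condition on `q` at position `j` with `a` replaced by `a + k - 1`,
while the first `k` conditions hold because `a ≥ 1`. Since `Sum p = n + Sum q`, this gives the
factor `x^n`, and the `C(n, k)` choices of `S` give the binomial coefficient.
-/

namespace ParkingFunction

open Finset Polynomial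

variable {n m k : ℕ}

lemma length_sortPF (p : Fin n → ℕ) : (sortPF p).length = n := by
  simp [sortPF]

lemma coe_sortPF (p : Fin n → ℕ) : (sortPF p : Multiset ℕ) = univ.val.map p := by
  rw [Fin.univ_val_map]
  exact Multiset.sort_eq ..

lemma mem_sortPF {p : Fin n → ℕ} {x : ℕ} : x ∈ sortPF p ↔ ∃ i, p i = x := by
  rw [← Multiset.mem_coe, coe_sortPF, Multiset.mem_map]
  simp

lemma exists_apply_eq_getD_sortPF (p : Fin n → ℕ) (i : Fin n) :
    ∃ j, p j = (sortPF p).getD i 0 := by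
  rw [List.getD_eq_getElem _ _ (by simp [length_sortPF])]
  exact mem_sortPF.1 (List.getElem_mem _)

lemma exists_getD_sortPF_eq_apply (p : Fin n → ℕ) (j : Fin n) :
    ∃ i : Fin n, (sortPF p).getD i 0 = p j := by
  obtain ⟨i, hi, hij⟩ := List.mem_iff_getElem.1 (mem_sortPF.2 ⟨j, rfl⟩)
  rw [length_sortPF] at hi
  exact ⟨⟨i, hi⟩, by rw [List.getD_eq_getElem _ _ (by simpa [length_sortPF]), hij]⟩

lemma mem_pfFinset {a : ℕ} {p : Fin n → ℕ} : p ∈ pfFinset a n ↔ IsAPF a p := by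
  refine ⟨fun h => (mem_filter.1 h).2, fun h => mem_filter.2 ⟨?_, h⟩⟩
  refine Fintype.mem_piFinset.2 fun j => mem_Icc.2 ⟨h.1 j, ?_⟩
  obtain ⟨i, hi⟩ := exists_getD_sortPF_eq_apply p j
  have := h.2 i
  omega

lemma not_isAPF_zero (hn : n ≠ 0) (p : Fin n → ℕ) : ¬ IsAPF 0 p := by
  rintro ⟨hpos, hsorted⟩
  have hn : 0 < n := Nat.pos_of_ne_zero hn
  obtain ⟨j, hj⟩ := exists_apply_eq_getD_sortPF p ⟨0, hn⟩
  have h0 : (sortPF p).getD 0 0 ≤ 0 := hsorted ⟨0, hn⟩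
  have h1 : 1 ≤ (sortPF p).getD 0 0 := hj ▸ hpos j
  omega

lemma sortPF_eq_replicate_append {p : Fin n → ℕ} {q : Fin m → ℕ}
    (h : univ.val.map p = Multiset.replicate k 1 + (univ.val.map q).map (· + 1)) :
    sortPF p = List.replicate k 1 ++ (sortPF q).map (· + 1) := by
  refine List.Perm.eq_of_pairwise' (Multiset.pairwise_sort ..) ?_ ?_
  · refine List.pairwise_append.2 ⟨List.pairwise_replicate.2 (Or.inr le_rfl),
      List.pairwise_map.2 ((Multiset.pairwise_sort ..).imp (by omega)), ?_⟩
    intro x hx y hy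
    obtain ⟨z, -, rfl⟩ := List.mem_map.1 hy
    rw [List.eq_of_mem_replicate hx]
    omega
  · rw [← Multiset.coe_eq_coe, coe_sortPF, h, ← Multiset.coe_add, Multiset.coe_replicate,
      ← Multiset.map_coe, coe_sortPF]

lemma getD_replicate_append_of_lt (c d : ℕ) (l : List ℕ) {i : ℕ} (hi : i < k) :
    (List.replicate k c ++ l).getD i d = c := by
  rw [List.getD_append _ _ _ _ (by simpa using hi), List.getD_eq_getElem _ _ (by simpa using hi),
    List.getElem_replicate]

lemma getD_replicate_append_add (c d : ℕ) (l : List ℕ) (j : ℕ) :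
    (List.replicate k c ++ l).getD (k + j) d = l.getD j d := by
  rw [List.getD_append_right _ _ _ _ (by simp)]
  simp

lemma isAPF_iff_of_sortPF_eq {a : ℕ} (ha : 1 ≤ a) {p : Fin n → ℕ} {q : Fin m → ℕ}
    (hq : ∀ j, 1 ≤ q j) (h : sortPF p = List.replicate k 1 ++ (sortPF q).map (· + 1)) :
    IsAPF a p ↔ IsAPF (a + k - 1) q := by
  have hn : n = k + m := by simpa [length_sortPF] using congrArg List.length h
  have shifted : ∀ j < m, (sortPF p).getD (k + j) 0 = (sortPF q).getD j 0 + 1 := by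
    intro j hj
    rw [h, getD_replicate_append_add, List.getD_eq_getElem _ _ (by simpa [length_sortPF]),
      List.getElem_map, List.getD_eq_getElem _ _ (by simpa [length_sortPF])]
  constructor
  · rintro ⟨-, hp⟩
    refine ⟨hq, fun j => ?_⟩
    have := hp ⟨k + j, by omega⟩
    dsimp only at this
    rw [shifted j j.2] at this
    omega
  · rintro ⟨-, hq'⟩
    have bound : ∀ i : Fin n, 1 ≤ (sortPF p).getD i 0 ∧ (sortPF p).getD i 0 ≤ a + i := by
      intro i
      by_cases hik : (i : ℕ) < k
      · rw [h, getD_replicate_append_of_lt _ _ _ hik]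
        omega
      · obtain ⟨j, hj⟩ : ∃ j, (i : ℕ) = k + j := ⟨i - k, by omega⟩
        have := hq' ⟨j, by omega⟩
        dsimp only at this
        rw [hj, shifted j (by omega)]
        omega
    refine ⟨fun j => ?_, fun i => (bound i).2⟩
    obtain ⟨i, hi⟩ := exists_getD_sortPF_eq_apply p j
    exact hi ▸ (bound i).1

def onesSet (p : Fin n → ℕ) : Finset (Fin n) := univ.filter (p · = 1)

lemma mem_onesSet {p : Fin n → ℕ} {i : Fin n} : i ∈ onesSet p ↔ p i = 1 := by
  simp [onesSet]

def insertOnes (S : Finset (Fin n)) (h : Sᶜ.card = m) (q : Fin m → ℕ) : Fin n → ℕ :=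
  fun i => if hi : i ∈ Sᶜ then q ((Sᶜ.orderIsoOfFin h).symm ⟨i, hi⟩) + 1 else 1

def deleteOnes (S : Finset (Fin n)) (h : Sᶜ.card = m) (p : Fin n → ℕ) : Fin m → ℕ :=
  fun j => p (Sᶜ.orderEmbOfFin h j) - 1

section insertOnes

variable (S : Finset (Fin n)) (h : Sᶜ.card = m) (q : Fin m → ℕ)

lemma insertOnes_of_mem {i : Fin n} (hi : i ∈ S) : insertOnes S h q i = 1 := by
  simp [insertOnes, hi]

lemma insertOnes_orderEmbOfFin (j : Fin m) :
    insertOnes S h q (Sᶜ.orderEmbOfFin h j) = q j + 1 := by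
  rw [insertOnes, dif_pos (Sᶜ.orderEmbOfFin_mem h j)]
  congr
  exact (Sᶜ.orderIsoOfFin h).symm_apply_apply j

lemma map_insertOnes :
    univ.val.map (insertOnes S h q)
      = Multiset.replicate S.card 1 + (univ.val.map q).map (· + 1) := by
  have huniv : univ.val = S.val + Sᶜ.val :=
    congrArg val (show univ = S.disjUnion Sᶜ disjoint_compl_right by simp)
  have hcompl : Sᶜ.val = univ.val.map (Sᶜ.orderEmbOfFin h) :=
    (congrArg val (Sᶜ.map_orderEmbOfFin_univ h)).symm
  rw [huniv, Multiset.map_add, hcompl, Multiset.map_map, Multiset.map_map]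
  congr 1
  · rw [Multiset.map_congr rfl fun i hi => insertOnes_of_mem S h q hi, Multiset.map_const',
      card_val]
  · exact Multiset.map_congr rfl fun j _ => insertOnes_orderEmbOfFin S h q j

lemma sum_insertOnes : ∑ i, insertOnes S h q i = n + ∑ j, q j := by
  have hcard : S.card + m = n := by rw [← h, card_add_card_compl, Fintype.card_fin]
  rw [sum_eq_multiset_sum, map_insertOnes, Multiset.sum_add, Multiset.sum_replicate,
    Multiset.sum_map_add, Multiset.map_const', Multiset.sum_replicate, Multiset.map_id',
    Multiset.card_map, card_val, card_univ, Fintype.card_fin, ← sum_eq_multiset_sum]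
  simp only [smul_eq_mul, mul_one]
  omega

lemma onesSet_insertOnes (hq : ∀ j, 1 ≤ q j) : onesSet (insertOnes S h q) = S := by
  ext i
  by_cases hi : i ∈ S
  · simp [mem_onesSet, insertOnes_of_mem S h q hi, hi]
  · obtain ⟨j, rfl⟩ : i ∈ Set.range (Sᶜ.orderEmbOfFin h) := by simpa using hi
    have := hq j
    rw [mem_onesSet, insertOnes_orderEmbOfFin]
    simp only [hi, iff_false]
    omega

-- Stated for `T = S` since `onesSet (insertOnes S h q)` cannot be rewritten to `S` under the
-- dependent proof `h'`.
lemma deleteOnes_insertOnes {T : Finset (Fin n)} (hT : T = S) (h' : Tᶜ.card = m) :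
    deleteOnes T h' (insertOnes S h q) = q := by
  subst hT
  funext j
  simp [deleteOnes, insertOnes_orderEmbOfFin]

end insertOnes

lemma isAPF_insertOnes_iff {a : ℕ} (ha : 1 ≤ a) {S : Finset (Fin n)} (hS : S.card = k)
    (h : Sᶜ.card = m) {q : Fin m → ℕ} (hq : ∀ j, 1 ≤ q j) :
    IsAPF a (insertOnes S h q) ↔ IsAPF (a + k - 1) q :=
  isAPF_iff_of_sortPF_eq ha hq (sortPF_eq_replicate_append (hS ▸ map_insertOnes S h q))

lemma one_le_deleteOnes_onesSet {p : Fin n → ℕ} (hp : ∀ i, 1 ≤ p i)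
    (h : (onesSet p)ᶜ.card = m) (j : Fin m) : 1 ≤ deleteOnes (onesSet p) h p j := by
  have hj := mem_compl.1 ((onesSet p)ᶜ.orderEmbOfFin_mem h j)
  rw [mem_onesSet] at hj
  have := hp ((onesSet p)ᶜ.orderEmbOfFin h j)
  rw [deleteOnes]
  omega

lemma insertOnes_deleteOnes_onesSet {p : Fin n → ℕ} (hp : ∀ i, 1 ≤ p i)
    (h : (onesSet p)ᶜ.card = m) : insertOnes (onesSet p) h (deleteOnes (onesSet p) h p) = p := by
  funext i
  by_cases hi : i ∈ onesSet p
  · rw [insertOnes_of_mem _ _ _ hi]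
    exact (mem_onesSet.1 hi).symm
  · obtain ⟨j, rfl⟩ : i ∈ Set.range ((onesSet p)ᶜ.orderEmbOfFin h) := by simpa using hi
    have := hp ((onesSet p)ᶜ.orderEmbOfFin h j)
    rw [insertOnes_orderEmbOfFin, deleteOnes]
    omega

lemma sum_filter_card_onesSet_eq_sum_product {a : ℕ} (ha : 1 ≤ a) (k : ℕ) :
    ∑ p ∈ (pfFinset a n).filter (fun p => (onesSet p).card = k), (X : ℚ[X]) ^ (∑ i, p i) =
      ∑ x ∈ powersetCard k (univ : Finset (Fin n)) ×ˢ pfFinset (a + k - 1) (n - k),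
        X ^ (n + ∑ j, x.2 j) := by
  have hcompl {S : Finset (Fin n)} (hS : S.card = k) : Sᶜ.card = n - k := by
    rw [card_compl, hS, Fintype.card_fin]
  refine sum_bij'
    (fun p hp => (onesSet p, deleteOnes (onesSet p) (hcompl (mem_filter.1 hp).2) p))
    (fun x hx => insertOnes x.1 (hcompl (mem_powersetCard.1 (mem_product.1 hx).1).2) x.2)
    ?_ ?_ ?_ ?_ ?_
  · intro p hp
    obtain ⟨hpa, hk⟩ := mem_filter.1 hp
    have hp1 := (mem_pfFinset.1 hpa).1
    refine mem_product.2 ⟨mem_powersetCard.2 ⟨subset_univ _, hk⟩, mem_pfFinset.2 ?_⟩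
    refine (isAPF_insertOnes_iff ha hk (hcompl hk) (one_le_deleteOnes_onesSet hp1 _)).1 ?_
    rw [insertOnes_deleteOnes_onesSet hp1]
    exact mem_pfFinset.1 hpa
  · rintro ⟨S, q⟩ hx
    obtain ⟨hS, hq⟩ := mem_product.1 hx
    have hk := (mem_powersetCard.1 hS).2
    have hqa := mem_pfFinset.1 hq
    refine mem_filter.2 ⟨mem_pfFinset.2 ((isAPF_insertOnes_iff ha hk _ hqa.1).2 hqa), ?_⟩
    rw [onesSet_insertOnes _ _ _ hqa.1, hk]
  · intro p hp
    exact insertOnes_deleteOnes_onesSet (mem_pfFinset.1 (mem_filter.1 hp).1).1 _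
  · rintro ⟨S, q⟩ hx
    obtain ⟨hS, hq⟩ := mem_product.1 hx
    have hone := onesSet_insertOnes S (hcompl (mem_powersetCard.1 hS).2) q (mem_pfFinset.1 hq).1
    exact Prod.ext hone (deleteOnes_insertOnes _ _ _ hone _)
  · intro p hp
    obtain ⟨hpa, hk⟩ := mem_filter.1 hp
    rw [← sum_insertOnes _ (hcompl hk), insertOnes_deleteOnes_onesSet (mem_pfFinset.1 hpa).1]

lemma sum_filter_card_onesSet_eq {a : ℕ} (ha : 1 ≤ a) (k : ℕ) :
    ∑ p ∈ (pfFinset a n).filter (fun p => (onesSet p).card = k), (X : ℚ[X]) ^ (∑ i, p i) =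
      X ^ n * ((n.choose k : ℚ[X]) * Ppoly (a + k - 1) (n - k)) := by
  rw [sum_filter_card_onesSet_eq_sum_product ha, sum_product, Ppoly]
  simp only [pow_add, ← mul_sum]
  rw [sum_const, card_powersetCard, card_univ, Fintype.card_fin, nsmul_eq_mul]

lemma Ppoly_eq_sum_filter_card_onesSet (a n : ℕ) :
    Ppoly a n = ∑ k ∈ range (n + 1),
      ∑ p ∈ (pfFinset a n).filter (fun p => (onesSet p).card = k), (X : ℚ[X]) ^ (∑ i, p i) :=
  (sum_fiberwise_of_maps_to (fun _ _ => mem_range_succ_iff.2 (card_le_univ _ |>.trans_eq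
    (Fintype.card_fin n))) _).symm

lemma Ppoly_zero_length (a : ℕ) : Ppoly a 0 = 1 := by
  have : pfFinset a 0 = {isEmptyElim} :=
    eq_singleton_iff_unique_mem.2 ⟨mem_pfFinset.2 ⟨isEmptyElim, isEmptyElim⟩,
      fun _ _ => Subsingleton.elim _ _⟩
  simp [Ppoly, this]

lemma Ppoly_zero_of_ne_zero (hn : n ≠ 0) : Ppoly 0 n = 0 := by
  rw [Ppoly, sum_eq_zero]
  intro p hp
  exact absurd (mem_pfFinset.1 hp) (not_isAPF_zero hn p)

end ParkingFunction

open Finset Polynomial ParkingFunction in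
/-- `P(n,a)(x) = x^n Σ_{k=0}^n C(n,k) P(n-k, a+k-1)(x)` for `a ≥ 1`, with
`P(0,a)(x) = 1` and `P(n,0)(x) = 0` for `n ≥ 1`. -/
theorem Ppoly_recurrence :
    (∀ a n : ℕ, 1 ≤ a →
        Ppoly a n = Polynomial.X ^ n *
          ∑ k ∈ Finset.range (n + 1),
            (n.choose k : Polynomial ℚ) * Ppoly (a + k - 1) (n - k)) ∧
    (∀ a : ℕ, Ppoly a 0 = 1) ∧
    (∀ n : ℕ, 1 ≤ n → Ppoly 0 n = 0) := by
  refine ⟨fun a n ha => ?_, Ppoly_zero_length, fun n hn => Ppoly_zero_of_ne_zero (by omega)⟩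
  rw [Ppoly_eq_sum_filter_card_onesSet, mul_sum]
  exact sum_congr rfl fun k _ => sum_filter_card_onesSet_eq ha k
end

section
/- The expectation of the area statistic over a uniformly random (ordinary) parking function of length n equals -n/2 + W_{n+1}/2, where W_m := (m!/m^{m-1})·Σ_{k=0}^{m-2} m^k/k!. -/
/-- The Riordan–Sloane quantity `W_m = (m!/m^(m-1)) Σ_{k=0}^{m-2} m^k/k!`. -/
noncomputable def Wq (m : ℕ) : ℚ :=
  ((m.factorial : ℚ) / (m : ℚ) ^ (m - 1)) *
    ∑ k ∈ Finset.range (m - 1), (m : ℚ) ^ k / (k.factorial : ℚ)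

open Finset

section Abel

variable {R : Type*} [CommSemiring R]

/-- `abelCoeff x k = x * (x + k) ^ (k - 1)`, read as `1` at `k = 0`. -/
def abelCoeff (x : R) : ℕ → R
  | 0 => 1
  | k + 1 => x * (x + (k + 1 : ℕ)) ^ k

lemma abelCoeff_succ (x : R) (k : ℕ) : abelCoeff x (k + 1) = x * (x + (k + 1 : ℕ)) ^ k := rfl

lemma abelCoeff_one (k : ℕ) : abelCoeff (1 : R) k = (k + 1 : ℕ) ^ (k - 1) := by
  cases k <;> simp [abelCoeff, add_comm]

def abelSum (m : ℕ) (x y : R) : R :=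
  ∑ ij ∈ antidiagonal m, m.choose ij.1 * abelCoeff x ij.1 * (y + ij.2) ^ ij.2

lemma abelSum_succ (m : ℕ) (x y : R) :
    abelSum (m + 1) x y =
      ∑ ij ∈ antidiagonal (m + 1), (m + 1).choose ij.1 * abelCoeff x ij.1 * abelCoeff y ij.2 +
        (m + 1) * abelSum m x (y + 1) := by
  have hpow : ∀ ij ∈ antidiagonal (m + 1),
      ((m + 1).choose ij.1 : R) * abelCoeff x ij.1 * (y + ij.2) ^ ij.2 =
        (m + 1).choose ij.1 * abelCoeff x ij.1 * abelCoeff y ij.2 +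
          (m + 1).choose ij.1 * ij.2 * abelCoeff x ij.1 * (y + ij.2) ^ (ij.2 - 1) := by
    rintro ⟨i, _ | j⟩ -
    · simp [abelCoeff]
    · simp only [abelCoeff, Nat.add_sub_cancel, pow_succ]
      ring
  rw [abelSum, sum_congr rfl hpow, sum_add_distrib, abelSum, mul_sum]
  congr 1
  rw [Nat.sum_antidiagonal_succ']
  simp only [Nat.cast_zero, mul_zero, zero_mul, zero_add]
  refine sum_congr rfl fun ⟨i, j⟩ hij => ?_
  have hchoose : ((m + 1).choose i : R) * (j + 1 : ℕ) = (m + 1) * m.choose i := by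
    obtain rfl : i + j = m := HasAntidiagonal.mem_antidiagonal.mp hij
    have h := Nat.choose_mul_succ_eq (i + j) i
    rw [show i + j + 1 - i = j + 1 by omega] at h
    rw [← Nat.cast_mul, ← h]
    push_cast
    ring
  rw [hchoose]
  push_cast
  ring

lemma sum_choose_mul_abelCoeff_mul_abelCoeff (m : ℕ) (x y : R) :
    ∑ ij ∈ antidiagonal (m + 1), (m + 1).choose ij.1 * abelCoeff x ij.1 * abelCoeff y ij.2 =
      y * abelSum m x (y + 1) + x * abelSum m y (x + 1) := by
  simp only [mul_assoc]
  rw [sum_antidiagonal_choose_succ_mul (fun i j => abelCoeff x i * abelCoeff y j), abelSum,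
    abelSum, mul_sum, mul_sum]
  congr 1
  · refine sum_congr rfl fun ij _ => ?_
    rw [abelCoeff_succ]
    push_cast
    ring
  · rw [← Nat.sum_antidiagonal_swap]
    refine sum_congr rfl fun ij _ => ?_
    rw [abelCoeff_succ, Prod.fst_swap, Prod.snd_swap]
    push_cast
    ring

theorem abelSum_eq (m : ℕ) (x y : R) : abelSum m x y = (x + y + m) ^ m := by
  induction m generalizing x y with
  | zero => simp [abelSum, abelCoeff]
  | succ m ih =>
    rw [abelSum_succ, sum_choose_mul_abelCoeff_mul_abelCoeff, ih, ih]
    push_cast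
    ring

lemma sum_choose_mul_pow_mul_abelCoeff (m : ℕ) (x y : R) :
    ∑ ij ∈ antidiagonal m, m.choose ij.1 * (x + ij.1) ^ ij.1 * abelCoeff y ij.2 =
      (x + y + m) ^ m := by
  rw [add_comm x, ← abelSum_eq, abelSum, ← Nat.sum_antidiagonal_swap]
  refine sum_congr rfl fun ij hij => ?_
  rw [Prod.fst_swap, Prod.snd_swap, ← HasAntidiagonal.mem_antidiagonal.mp hij,
    Nat.choose_symm_add]
  ring

lemma sum_choose_mul_pow_succ_mul_abelCoeff (m : ℕ) (x y : R) :
    ∑ ij ∈ antidiagonal m, m.choose ij.1 * (x + ij.1) ^ (ij.1 + 1) * abelCoeff y ij.2 =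
      ∑ k ∈ range (m + 1), m.descFactorial k * (x + k) * (x + y + m) ^ (m - k) := by
  induction m generalizing x with
  | zero => simp [abelCoeff]
  | succ m ih =>
    have hsplit : ∀ ij ∈ antidiagonal (m + 1),
        ((m + 1).choose ij.1 : R) * (x + ij.1) ^ (ij.1 + 1) * abelCoeff y ij.2 =
          x * ((m + 1).choose ij.1 * (x + ij.1) ^ ij.1 * abelCoeff y ij.2) +
            (m + 1).choose ij.1 * ij.1 * (x + ij.1) ^ ij.1 * abelCoeff y ij.2 := by
      intro ij _
      ring
    rw [sum_congr rfl hsplit, sum_add_distrib, ← mul_sum, sum_choose_mul_pow_mul_abelCoeff,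
      Nat.sum_antidiagonal_succ, sum_range_succ', Nat.cast_zero, mul_zero, zero_mul, zero_mul,
      zero_add]
    have hshift : ∀ ij ∈ antidiagonal m,
        ((m + 1).choose (ij.1 + 1) : R) * (ij.1 + 1 : ℕ) * (x + (ij.1 + 1 : ℕ)) ^ (ij.1 + 1) *
            abelCoeff y ij.2 =
          (m + 1) * (m.choose ij.1 * (x + 1 + ij.1) ^ (ij.1 + 1) * abelCoeff y ij.2) := by
      intro ij _
      rw [← Nat.cast_mul, ← Nat.add_one_mul_choose_eq]
      push_cast
      ring
    rw [sum_congr rfl hshift, ← mul_sum, ih, mul_sum]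
    rw [add_comm, Nat.descFactorial_zero, Nat.cast_one, one_mul, add_zero, Nat.sub_zero]
    congr 1
    refine sum_congr rfl fun k _ => ?_
    rw [Nat.succ_descFactorial_succ, Nat.add_sub_add_right]
    push_cast
    ring

end Abel

lemma sum_descFactorial_mul_add_mul_pow (m c : ℕ) :
    ∑ k ∈ range (m + 1), m.descFactorial k * (c + k) * (m + c) ^ (m - k) = (m + c) ^ (m + 1) := by
  have partial_sums : ∀ r, ∑ k ∈ range r, m.descFactorial k * (c + k) * (m + c) ^ (m - k) +
      m.descFactorial r * (m + c) ^ (m + 1 - r) = (m + c) ^ (m + 1) := by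
    intro r
    induction r with
    | zero => simp
    | succ r ih =>
      rw [← ih, sum_range_succ, add_assoc]
      congr 1
      rcases le_or_gt r m with hr | hr
      · rw [Nat.descFactorial_succ, show m + 1 - r = m - r + 1 by omega, Nat.add_sub_add_right,
          pow_succ, ← show c + r + (m - r) = m + c by omega]
        ring
      · simp [Nat.descFactorial_eq_zero_iff_lt.mpr hr]
  simpa [Nat.descFactorial_eq_zero_iff_lt.mpr (Nat.lt_succ_self m)] using partial_sums (m + 1)

lemma Wq_mul_pow (N : ℕ) :
    Wq (N + 2) * (N + 2 : ℚ) ^ N =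
      (N + 1) * ∑ j ∈ range (N + 1), (N.descFactorial j : ℚ) * (N + 2 : ℚ) ^ (N - j) := by
  rw [Wq, show N + 2 - 1 = N + 1 by omega, ← sum_range_reflect, mul_sum, sum_mul, mul_sum]
  refine sum_congr rfl fun j hj => ?_
  have hfact : ((N - j).factorial : ℚ) * N.descFactorial j = N.factorial := by
    exact_mod_cast Nat.factorial_mul_descFactorial (Nat.lt_succ_iff.mp (mem_range.mp hj))
  rw [show N + 1 - 1 - j = N - j by omega, Nat.factorial_succ, Nat.factorial_succ]
  push_cast
  rw [← hfact]
  field_simp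
  ring

lemma sum_range_sub_self (n : ℕ) : ∑ t ∈ range n, (n - t) = n * (n + 1) / 2 := by
  have h : ∑ t ∈ range n, (n - t) = ∑ t ∈ range (n + 1), t := by
    rw [sum_range_succ', ← sum_range_reflect]
    exact sum_congr rfl fun t ht => by have := mem_range.mp ht; omega
  rw [h, sum_range_id, Nat.add_sub_cancel, mul_comm]

lemma sum_Icc_one_mul_two (m : ℕ) : (∑ s ∈ Icc 1 m, s) * 2 = m * (m + 1) := by
  induction m with
  | zero => rfl
  | succ m ih =>
    rw [sum_Icc_succ_top (Nat.le_add_left 1 m), add_mul, ih]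
    ring

section CountLE

variable {ι κ : Type*} [Fintype ι] [Fintype κ]

def countLE (p : ι → ℕ) (t : ℕ) : ℕ := #{i | p i ≤ t}

lemma countLE_le_card (p : ι → ℕ) (t : ℕ) : countLE p t ≤ Fintype.card ι :=
  card_filter_le _ _

lemma countLE_mono (p : ι → ℕ) : Monotone (countLE p) :=
  fun _ _ h => card_le_card (monotone_filter_right _ fun _ _ hi => hi.trans h)

lemma countLE_comp_equiv (e : κ ≃ ι) (p : ι → ℕ) (t : ℕ) : countLE (p ∘ e) t = countLE p t :=
  card_equiv e (by simp)

lemma countLE_eq_zero {p : ι → ℕ} {t : ℕ} (h : ∀ i, t < p i) : countLE p t = 0 :=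
  card_filter_eq_zero_iff.mpr fun i _ => not_le.mpr (h i)

lemma countLE_eq_card {p : ι → ℕ} {t : ℕ} (h : ∀ i, p i ≤ t) : countLE p t = Fintype.card ι :=
  card_filter_eq_iff.mpr fun i _ => h i

lemma countLE_add_const (p : ι → ℕ) (c t : ℕ) :
    countLE (fun i => p i + c) (t + c) = countLE p t := by
  simp only [countLE, Nat.add_le_add_iff_right]

lemma le_card_of_card_le_countLE {p : ι → ℕ}
    (h : Fintype.card ι ≤ countLE p (Fintype.card ι)) (i : ι) : p i ≤ Fintype.card ι :=
  card_filter_eq_iff.mp ((countLE_le_card p _).antisymm h) i (mem_univ i)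

lemma exists_countLE_lt (p : ι → ℕ) : ∃ t, countLE p t < t :=
  ⟨Fintype.card ι + 1, Nat.lt_succ_of_le (countLE_le_card p _)⟩

def firstDeficit (p : ι → ℕ) : ℕ := Nat.find (exists_countLE_lt p)

lemma firstDeficit_eq_iff {p : ι → ℕ} {k : ℕ} :
    firstDeficit p = k ↔ countLE p k < k ∧ ∀ t < k, t ≤ countLE p t := by
  simp only [firstDeficit, Nat.find_eq_iff, not_lt]

lemma le_countLE_of_lt_firstDeficit {p : ι → ℕ} {t : ℕ} (ht : t < firstDeficit p) :
    t ≤ countLE p t :=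
  not_lt.mp (Nat.find_min (exists_countLE_lt p) ht)

lemma countLE_firstDeficit_lt (p : ι → ℕ) : countLE p (firstDeficit p) < firstDeficit p :=
  Nat.find_spec (exists_countLE_lt p)

lemma firstDeficit_le (p : ι → ℕ) : firstDeficit p ≤ Fintype.card ι + 1 :=
  Nat.find_min' _ (Nat.lt_succ_of_le (countLE_le_card p _))

variable [DecidableEq ι] [DecidableEq κ]

lemma countLE_eq_add_subtype (p : ι → ℕ) (S : Finset ι) (t : ℕ) :
    countLE p t =
      countLE (fun i : S => p i) t + countLE (fun i : {i // i ∉ S} => p i) t := by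
  simp only [countLE, card_filter]
  convert (Fintype.sum_subtype_add_sum_subtype (· ∈ S) fun i => if p i ≤ t then 1 else 0).symm

variable (ι) in
def parkingFns : Finset (ι → ℕ) :=
  {p ∈ Fintype.piFinset fun _ => Icc 1 (Fintype.card ι) |
    ∀ t ≤ Fintype.card ι, t ≤ countLE p t}

lemma mem_parkingFns {p : ι → ℕ} :
    p ∈ parkingFns ι ↔
      (∀ i, p i ∈ Icc 1 (Fintype.card ι)) ∧ ∀ t ≤ Fintype.card ι, t ≤ countLE p t := by
  rw [parkingFns, mem_filter, Fintype.mem_piFinset]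

lemma comp_equiv_mem_parkingFns (e : κ ≃ ι) {p : ι → ℕ} :
    p ∘ e ∈ parkingFns κ ↔ p ∈ parkingFns ι := by
  simp only [mem_parkingFns, countLE_comp_equiv, Fintype.card_congr e, Function.comp_apply,
    e.forall_congr_left, Equiv.apply_symm_apply]

lemma card_parkingFns_congr (e : κ ≃ ι) : #(parkingFns κ) = #(parkingFns ι) :=
  card_equiv (e.arrowCongr (Equiv.refl ℕ)) fun _ => (comp_equiv_mem_parkingFns e.symm).symm

lemma sum_parkingFns_apply_eq {M : Type*} [AddCommMonoid M] (f : ℕ → M) (i j : ι) :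
    ∑ p ∈ parkingFns ι, f (p i) = ∑ p ∈ parkingFns ι, f (p j) :=
  sum_equiv ((Equiv.swap i j).arrowCongr (Equiv.refl ℕ))
    (fun _ => (comp_equiv_mem_parkingFns (Equiv.swap i j).symm).symm)
    (fun p _ => by simp)

lemma sum_parkingFns_sum_apply (i : ι) :
    ∑ p ∈ parkingFns ι, ∑ j, p j = Fintype.card ι * ∑ p ∈ parkingFns ι, p i := by
  rw [sum_comm, ← smul_eq_mul, ← card_univ, ← sum_const]
  exact sum_congr rfl fun j _ => sum_parkingFns_apply_eq id j i

lemma sum_le_of_mem_parkingFns {p : ι → ℕ} (hp : p ∈ parkingFns ι) :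
    ∑ i, p i ≤ Fintype.card ι * (Fintype.card ι + 1) / 2 := by
  obtain ⟨hval, hcount⟩ := mem_parkingFns.mp hp
  have layer : ∀ i, #{t ∈ range (Fintype.card ι) | t < p i} = p i := by
    intro i
    have := (mem_Icc.mp (hval i)).2
    conv_rhs => rw [← card_range (p i)]
    congr 1
    ext t
    simp only [mem_filter, mem_range]
    omega
  calc ∑ i, p i = ∑ i, #{t ∈ range (Fintype.card ι) | t < p i} :=
        (sum_congr rfl fun i _ => layer i).symm
    _ = ∑ t ∈ range (Fintype.card ι), #{i | t < p i} :=
        sum_card_bipartiteAbove_eq_sum_card_bipartiteBelow _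
    _ ≤ ∑ t ∈ range (Fintype.card ι), (Fintype.card ι - t) := by
        refine sum_le_sum fun t ht => ?_
        have hsplit := card_filter_add_card_filter_not (s := univ) (fun i => p i ≤ t)
        have := hcount t (mem_range.mp ht).le
        simp only [not_le, card_univ, countLE] at hsplit this
        omega
    _ = _ := sum_range_sub_self _

variable (ι) in
def parkingTails : Finset (ι → ℕ) :=
  {p ∈ Fintype.piFinset fun _ => Icc 1 (Fintype.card ι + 1) |
    ∀ t ≤ Fintype.card ι + 1, t ≤ countLE p t + 1}

lemma mem_parkingTails {p : ι → ℕ} :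
    p ∈ parkingTails ι ↔ (∀ i, p i ∈ Icc 1 (Fintype.card ι + 1)) ∧
      ∀ t ≤ Fintype.card ι + 1, t ≤ countLE p t + 1 := by
  rw [parkingTails, mem_filter, Fintype.mem_piFinset]

end CountLE

lemma List.Pairwise.getD_le_iff_lt_countP {l : List ℕ} (hl : l.Pairwise (· ≤ ·)) {i : ℕ}
    (hi : i < l.length) (t : ℕ) : l.getD i 0 ≤ t ↔ i < l.countP (· ≤ t) := by
  induction l generalizing i with
  | nil => simp at hi
  | cons a l ih =>
    obtain ⟨ha, hl⟩ := List.pairwise_cons.mp hl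
    by_cases hat : a ≤ t
    · rcases i with _ | i
      · simp [hat]
      · rw [List.getD_cons_succ, List.countP_cons_of_pos (by simpa using hat),
          ih hl (Nat.lt_of_succ_lt_succ hi), Nat.add_lt_add_iff_right]
    · have hgt : ∀ b ∈ a :: l, t < b := fun b hb => by
        rcases List.mem_cons.mp hb with rfl | hb
        · exact Nat.lt_of_not_le hat
        · exact (Nat.lt_of_not_le hat).trans_le (ha b hb)
      rw [List.countP_eq_zero.mpr fun b hb => by simpa using hgt b hb, List.getD_eq_getElem _ _ hi]
      simpa using hgt _ (List.getElem_mem hi)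

lemma sortPF_length {n : ℕ} (p : Fin n → ℕ) : (sortPF p).length = n := by
  simp [sortPF]

lemma countP_sortPF {n : ℕ} (p : Fin n → ℕ) (t : ℕ) : (sortPF p).countP (· ≤ t) = countLE p t := by
  rw [← Multiset.coe_countP, sortPF, Multiset.sort_eq, ← Fin.univ_val_map, Multiset.countP_map]
  rfl

lemma sortPF_le_iff_le_countLE {n : ℕ} (p : Fin n → ℕ) :
    (∀ i : Fin n, (sortPF p).getD i 0 ≤ 1 + i) ↔ ∀ t ≤ n, t ≤ countLE p t := by
  have hsorted : (sortPF p).Pairwise (· ≤ ·) := Multiset.pairwise_sort _ _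
  have hiff (i : Fin n) : (sortPF p).getD i 0 ≤ 1 + i ↔ (i : ℕ) + 1 ≤ countLE p (i + 1) := by
    rw [add_comm 1, hsorted.getD_le_iff_lt_countP (by rw [sortPF_length]; exact i.isLt),
      countP_sortPF, Nat.lt_iff_add_one_le]
  simp only [hiff]
  constructor
  · rintro h (_ | t) ht
    · exact Nat.zero_le _
    · exact h ⟨t, ht⟩
  · exact fun h i => h (i + 1) i.isLt

lemma pfFinset_one_eq (n : ℕ) : pfFinset 1 n = parkingFns (Fin n) := by
  ext p
  simp only [pfFinset, IsAPF, mem_filter, Fintype.mem_piFinset, mem_parkingFns, Fintype.card_fin,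
    mem_Icc, sortPF_le_iff_le_countLE]
  constructor
  · rintro ⟨-, hpos, hcount⟩
    have hle := le_card_of_card_le_countLE (p := p) (by simpa using hcount n le_rfl)
    exact ⟨fun i => ⟨hpos i, by simpa using hle i⟩, hcount⟩
  · rintro ⟨hval, hcount⟩
    exact ⟨fun i => ⟨(hval i).1, (hval i).2.trans (Nat.le_add_left _ _)⟩, fun i => (hval i).1,
      hcount⟩

section Glue

variable {ι : Type*} [DecidableEq ι]

def glue (S : Finset ι) (k : ℕ) (q : S → ℕ) (r : {i // i ∉ S} → ℕ) (i : ι) : ℕ :=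
  if h : i ∈ S then q ⟨i, h⟩ else r ⟨i, h⟩ + (k + 1)

lemma glue_restrict {k : ℕ} {S : Finset ι} {p : ι → ℕ} (h : ∀ i ∉ S, k < p i) :
    glue S k (fun i : S => p i) (fun i : {i // i ∉ S} => p i - (k + 1)) = p := by
  funext i
  by_cases hi : i ∈ S
  · simp [glue, hi]
  · have := h i hi
    simp only [glue, hi, dif_neg, not_false_eq_true]
    omega

variable [Fintype ι]

lemma countLE_glue (S : Finset ι) (k : ℕ) (q : S → ℕ) (r : {i // i ∉ S} → ℕ) (t : ℕ) :
    countLE (glue S k q r) t = countLE q t + countLE (fun i => r i + (k + 1)) t := by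
  rw [countLE_eq_add_subtype _ S]
  congr 2 <;> funext i
  · exact dif_pos i.2
  · exact dif_neg i.2

def deficitFiber (k : ℕ) (S : Finset ι) : Finset (ι → ℕ) :=
  {p ∈ parkingTails ι | firstDeficit p = k + 1 ∧ ({i | p i ≤ k} : Finset ι) = S}

lemma mem_deficitFiber {k : ℕ} {S : Finset ι} {p : ι → ℕ} :
    p ∈ deficitFiber k S ↔
      p ∈ parkingTails ι ∧ firstDeficit p = k + 1 ∧ ∀ i, i ∈ S ↔ p i ≤ k := by
  simp only [deficitFiber, mem_filter, Finset.ext_iff, mem_filter, mem_univ, true_and, iff_comm]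

lemma glue_mem_deficitFiber {k : ℕ} {S : Finset ι} (hS : #S = k) {q : S → ℕ}
    {r : {i // i ∉ S} → ℕ} (hq : q ∈ parkingFns S) (hr : r ∈ parkingFns {i // i ∉ S}) :
    glue S k q r ∈ deficitFiber k S := by
  rw [mem_parkingFns, Fintype.card_coe, hS] at hq
  rw [mem_parkingFns, Fintype.card_subtype_compl, Fintype.card_coe, hS] at hr
  obtain ⟨hqval, hqcount⟩ := hq
  obtain ⟨hrval, hrcount⟩ := hr
  simp only [mem_Icc] at hqval hrval
  have hk : k ≤ Fintype.card ι := hS ▸ card_le_univ S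
  have hlow (t : ℕ) (ht : t ≤ k) : countLE (glue S k q r) t = countLE q t := by
    rw [countLE_glue, countLE_eq_zero (p := fun i => r i + (k + 1)) fun i => by omega,
      add_zero]
  have hhigh (u : ℕ) : countLE (glue S k q r) (u + (k + 1)) = k + countLE r u := by
    rw [countLE_glue, countLE_add_const,
      countLE_eq_card (p := q) fun i => by have := hqval i; omega, Fintype.card_coe, hS]
  simp only [mem_deficitFiber, mem_parkingTails, firstDeficit_eq_iff, mem_Icc]
  refine ⟨⟨fun i => ?_, fun t ht => ?_⟩, ⟨?_, fun t ht => ?_⟩, fun i => ?_⟩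
  · unfold glue
    split_ifs with h
    · have := hqval ⟨i, h⟩
      omega
    · have := hrval ⟨i, h⟩
      omega
  · rcases le_or_gt t k with htk | htk
    · rw [hlow t htk]
      have := hqcount t htk
      omega
    · obtain ⟨u, rfl⟩ : ∃ u, t = u + (k + 1) := ⟨t - (k + 1), by omega⟩
      rw [hhigh]
      have := hrcount u (by omega)
      omega
  · rw [← zero_add (k + 1), hhigh, countLE_eq_zero (p := r) fun i => (hrval i).1]
    omega
  · rw [hlow t (by omega)]
    exact hqcount t (by omega)
  · by_cases h : i ∈ S
    · simpa [glue, h] using (hqval ⟨i, h⟩).2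
    · simp only [glue, h, dif_neg, not_false_eq_true, false_iff]
      omega

lemma lt_of_mem_deficitFiber {k : ℕ} {S : Finset ι} (hS : #S = k) {p : ι → ℕ}
    (hp : p ∈ deficitFiber k S) {i : ι} (hi : i ∉ S) : k + 1 < p i := by
  obtain ⟨-, hfd, hmem⟩ := mem_deficitFiber.mp hp
  have hS_count : countLE (fun i : S => p i) (k + 1) = k := by
    rw [countLE_eq_card (p := fun i : S => p i) fun i => ((hmem i).mp i.2).trans k.le_succ,
      Fintype.card_coe, hS]
  have hsplit := countLE_eq_add_subtype p S (k + 1)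
  have := (firstDeficit_eq_iff.mp hfd).1
  have hzero : countLE (fun i : {i // i ∉ S} => p i) (k + 1) = 0 := by omega
  exact not_le.mp (card_filter_eq_zero_iff.mp hzero ⟨i, hi⟩ (mem_univ _))

lemma restrict_mem_parkingFns_of_mem_deficitFiber {k : ℕ} {S : Finset ι} (hS : #S = k)
    {p : ι → ℕ} (hp : p ∈ deficitFiber k S) :
    (fun i : S => p i) ∈ parkingFns S ∧
      (fun i : {i // i ∉ S} => p i - (k + 1)) ∈ parkingFns {i // i ∉ S} := by
  have hgt := fun i => lt_of_mem_deficitFiber hS hp (i := i)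
  simp only [mem_deficitFiber, mem_parkingTails, firstDeficit_eq_iff, mem_Icc] at hp
  obtain ⟨⟨hval, hcount⟩, ⟨-, hmin⟩, hmem⟩ := hp
  have hk : k ≤ Fintype.card ι := hS ▸ card_le_univ S
  have hsplit := countLE_eq_add_subtype p S
  rw [mem_parkingFns, mem_parkingFns, Fintype.card_subtype_compl, Fintype.card_coe, hS]
  refine ⟨⟨fun i => ?_, fun t ht => ?_⟩, ⟨fun i => ?_, fun t ht => ?_⟩⟩
  · have := hval i
    have := (hmem i).mp i.2
    rw [mem_Icc]
    omega
  · have := hmin t (by omega)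
    rwa [hsplit t, countLE_eq_zero (p := fun i : {i // i ∉ S} => p i)
      fun i => by have := (hmem i).not.mp i.2; omega, add_zero] at this
  · have := hval i
    have := hgt i i.2
    rw [mem_Icc]
    omega
  · have hshift : countLE (fun i : {i // i ∉ S} => p i - (k + 1)) t =
        countLE (fun i : {i // i ∉ S} => p i) (t + (k + 1)) := by
      rw [← countLE_add_const]
      congr 1
      funext i
      have := hgt i i.2
      omega
    have hS_count : countLE (fun i : S => p i) (t + (k + 1)) = k := by
      rw [countLE_eq_card (p := fun i : S => p i) fun i => by have := (hmem i).mp i.2; omega,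
        Fintype.card_coe, hS]
    have := hsplit (t + (k + 1))
    have := hcount (t + (k + 1)) (by omega)
    omega

lemma card_deficitFiber {k : ℕ} {S : Finset ι} (hS : #S = k) :
    #(deficitFiber k S) = #(parkingFns S) * #(parkingFns {i // i ∉ S}) := by
  rw [← card_product]
  refine card_nbij' (fun p => (fun i : S => p i, fun i : {i // i ∉ S} => p i - (k + 1)))
    (fun qr => glue S k qr.1 qr.2) (fun p hp => ?_) (fun qr hqr => ?_) (fun p hp => ?_)
    (fun qr _ => ?_)
  · exact mem_product.mpr (restrict_mem_parkingFns_of_mem_deficitFiber hS hp)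
  · exact glue_mem_deficitFiber hS (mem_product.mp hqr).1 (mem_product.mp hqr).2
  · exact glue_restrict fun i hi => (lt_of_mem_deficitFiber hS hp hi).le
  · ext i
    · exact dif_pos i.2
    · simp [glue, i.2]

lemma card_filter_firstDeficit_eq (k : ℕ) :
    #{p ∈ parkingTails ι | firstDeficit p = k + 1} =
      (Fintype.card ι).choose k *
        (#(parkingFns (Fin k)) * #(parkingFns (Fin (Fintype.card ι - k)))) := by
  have hmaps : ∀ p ∈ {p ∈ parkingTails ι | firstDeficit p = k + 1},
      ({i | p i ≤ k} : Finset ι) ∈ powersetCard k univ := by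
    intro p hp
    obtain ⟨hdef, hmin⟩ := firstDeficit_eq_iff.mp (mem_filter.mp hp).2
    have := hmin k (Nat.lt_succ_self k)
    have := countLE_mono p (Nat.le_add_right k 1)
    rw [mem_powersetCard_univ]
    change countLE p k = k
    omega
  have hfiber : ∀ S ∈ powersetCard k univ,
      #{p ∈ {p ∈ parkingTails ι | firstDeficit p = k + 1} | ({i | p i ≤ k} : Finset ι) = S} =
        #(parkingFns (Fin k)) * #(parkingFns (Fin (Fintype.card ι - k))) := by
    intro S hS
    have hS := mem_powersetCard_univ.mp hS
    have eS : S ≃ Fin k := Fintype.equivFinOfCardEq (by rw [Fintype.card_coe, hS])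
    have eSc : {i // i ∉ S} ≃ Fin (Fintype.card ι - k) :=
      Fintype.equivFinOfCardEq (by rw [Fintype.card_subtype_compl, Fintype.card_coe, hS])
    rw [filter_filter, ← deficitFiber, card_deficitFiber hS, card_parkingFns_congr eS,
      card_parkingFns_congr eSc]
  rw [card_eq_sum_card_fiberwise hmaps, sum_congr rfl hfiber, sum_const, card_powersetCard,
    card_univ, smul_eq_mul]

end Glue

lemma countLE_cons {N : ℕ} (s : ℕ) (p : Fin N → ℕ) (t : ℕ) :
    countLE (Fin.cons s p : Fin (N + 1) → ℕ) t = (if s ≤ t then 1 else 0) + countLE p t := by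
  simp [countLE, Fin.card_filter_univ_succ']

lemma cons_mem_parkingFns_iff {N : ℕ} (s : ℕ) (p : Fin N → ℕ) :
    (Fin.cons s p : Fin (N + 1) → ℕ) ∈ parkingFns (Fin (N + 1)) ↔
      p ∈ parkingTails (Fin N) ∧ s ∈ Icc 1 (firstDeficit p) := by
  have hfd := firstDeficit_le p
  simp only [mem_parkingFns, mem_parkingTails, Fin.forall_fin_succ, Fin.cons_zero, Fin.cons_succ,
    countLE_cons, Fintype.card_fin, mem_Icc] at hfd ⊢
  constructor
  · rintro ⟨⟨hs, hp⟩, hcount⟩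
    refine ⟨⟨hp, fun t ht => ?_⟩, hs.1, ?_⟩
    · have := hcount t ht
      split_ifs at this <;> omega
    · by_contra! hlt
      have h1 := hcount _ hfd
      rw [if_neg (by omega)] at h1
      have := countLE_firstDeficit_lt p
      omega
  · rintro ⟨⟨hp, hcount⟩, hs1, hs2⟩
    refine ⟨⟨⟨hs1, by omega⟩, hp⟩, fun t ht => ?_⟩
    split_ifs with hst
    · have := hcount t ht
      omega
    · have := le_countLE_of_lt_firstDeficit (p := p) (t := t) (by omega)
      omega

lemma sum_parkingFns_apply_zero_eq_sum_parkingTails {M : Type*} [AddCommMonoid M] (f : ℕ → M)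
    (N : ℕ) :
    ∑ p ∈ parkingFns (Fin (N + 1)), f (p 0) =
      ∑ q ∈ parkingTails (Fin N), ∑ s ∈ Icc 1 (firstDeficit q), f s := by
  rw [sum_sigma']
  refine sum_nbij' (fun p => ⟨Fin.tail p, p 0⟩) (fun x => Fin.cons x.2 x.1) ?_ ?_ ?_ ?_ ?_
  · intro p hp
    rw [← Fin.cons_self_tail p, cons_mem_parkingFns_iff] at hp
    exact mem_sigma.mpr hp
  · rintro ⟨q, s⟩ hx
    exact (cons_mem_parkingFns_iff s q).mpr (mem_sigma.mp hx)
  · intro p _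
    exact Fin.cons_self_tail p
  · rintro ⟨q, s⟩ _
    simp
  · intro p _
    rfl

lemma sum_parkingFns_apply_zero {M : Type*} [AddCommMonoid M] (f : ℕ → M) (N : ℕ) :
    ∑ p ∈ parkingFns (Fin (N + 1)), f (p 0) =
      ∑ k ∈ range (N + 1), (N.choose k * (#(parkingFns (Fin k)) * #(parkingFns (Fin (N - k))))) •
        ∑ s ∈ Icc 1 (k + 1), f s := by
  have hpos (q : Fin N → ℕ) : 0 < firstDeficit q :=
    Nat.pos_of_ne_zero fun h => by simpa [h] using countLE_firstDeficit_lt q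
  have hmaps : ∀ q ∈ parkingTails (Fin N), firstDeficit q - 1 ∈ range (N + 1) := fun q _ => by
    have := firstDeficit_le q
    rw [Fintype.card_fin] at this
    exact mem_range.mpr (by omega)
  rw [sum_parkingFns_apply_zero_eq_sum_parkingTails, ← sum_fiberwise_of_maps_to hmaps]
  refine sum_congr rfl fun k _ => ?_
  have hfiber : {q ∈ parkingTails (Fin N) | firstDeficit q - 1 = k} =
      {q ∈ parkingTails (Fin N) | firstDeficit q = k + 1} :=
    filter_congr fun q _ => by have := hpos q; omega
  rw [hfiber, sum_congr rfl fun q hq => by rw [(mem_filter.mp hq).2], sum_const,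
    card_filter_firstDeficit_eq, Fintype.card_fin]

lemma card_parkingFns (n : ℕ) : #(parkingFns (Fin n)) = (n + 1) ^ (n - 1) := by
  induction n using Nat.strong_induction_on with
  | _ n ih =>
    rcases n with _ | N
    · rfl
    have hterm : ∀ k ∈ range (N + 1),
        (N.choose k * (#(parkingFns (Fin k)) * #(parkingFns (Fin (N - k))))) •
            ∑ s ∈ Icc 1 (k + 1), 1 =
          N.choose k * (1 + k) ^ k * abelCoeff 1 (N - k) := by
      intro k hk
      have hk := mem_range.mp hk
      rw [ih k (by omega), ih (N - k) (by omega), abelCoeff_one, sum_const, Nat.card_Icc,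
        Nat.add_sub_cancel, smul_eq_mul, smul_eq_mul, Nat.cast_id]
      rcases k with _ | k
      · simp
      · rw [Nat.add_sub_cancel]
        ring
    have habel := sum_choose_mul_pow_mul_abelCoeff N (1 : ℕ) 1
    simp only [Nat.cast_id] at habel
    rw [card_eq_sum_ones, sum_parkingFns_apply_zero (fun _ => 1), sum_congr rfl hterm,
      ← Nat.sum_antidiagonal_eq_sum_range_succ_mk
        (fun ij => N.choose ij.1 * (1 + ij.1) ^ ij.1 * abelCoeff 1 ij.2), habel,
      Nat.add_sub_cancel]
    ring

lemma two_mul_sum_parkingFns_apply_zero_add (N : ℕ) :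
    2 * ∑ p ∈ parkingFns (Fin (N + 1)), p 0 +
        ∑ k ∈ range (N + 1), N.descFactorial k * (N + 2) ^ (N - k) =
      (N + 3) * (N + 2) ^ N := by
  -- `(k + 1) (k + 2) (k + 1) ^ (k - 1) = (k + 1) ^ (k + 1) + (k + 1) ^ k` gives two Abel sums
  have hterm : ∀ k ∈ range (N + 1),
      2 * ((N.choose k * (#(parkingFns (Fin k)) * #(parkingFns (Fin (N - k))))) •
          ∑ s ∈ Icc 1 (k + 1), s) =
        N.choose k * (1 + k) ^ (k + 1) * abelCoeff 1 (N - k) +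
          N.choose k * (1 + k) ^ k * abelCoeff 1 (N - k) := by
    intro k _
    rw [card_parkingFns, card_parkingFns, abelCoeff_one, smul_eq_mul, Nat.cast_id,
      mul_comm 2, mul_assoc _ _ 2, sum_Icc_one_mul_two]
    rcases k with _ | k
    · simp only [Nat.sub_zero, zero_add, one_pow]
      ring
    · rw [Nat.add_sub_cancel]
      ring
  have hsum := sum_parkingFns_apply_zero (fun s => s) N
  have hB := sum_choose_mul_pow_succ_mul_abelCoeff N (1 : ℕ) 1
  have hA := sum_choose_mul_pow_mul_abelCoeff N (1 : ℕ) 1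
  simp only [Nat.cast_id] at hA hB
  rw [hsum, mul_sum, sum_congr rfl hterm, sum_add_distrib,
    ← Nat.sum_antidiagonal_eq_sum_range_succ_mk
      (fun ij => N.choose ij.1 * (1 + ij.1) ^ (ij.1 + 1) * abelCoeff 1 ij.2), hB,
    ← Nat.sum_antidiagonal_eq_sum_range_succ_mk
      (fun ij => N.choose ij.1 * (1 + ij.1) ^ ij.1 * abelCoeff 1 ij.2), hA,
    add_right_comm, ← sum_add_distrib]
  rw [← show (N + 2) ^ (N + 1) + (N + 2) ^ N = (N + 3) * (N + 2) ^ N by ring,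
    ← sum_descFactorial_mul_add_mul_pow N 2]
  congr 1
  · exact sum_congr rfl fun k _ => by ring
  · ring

lemma sum_area_parkingFns {n : ℕ} (i : Fin n) :
    ∑ p ∈ parkingFns (Fin n), ((n * (n + 1) / 2 - ∑ j, p j : ℕ) : ℚ) =
      #(parkingFns (Fin n)) * (n * (n + 1) / 2) - n * ∑ p ∈ parkingFns (Fin n), (p i : ℚ) := by
  have hbound (p) (hp : p ∈ parkingFns (Fin n)) : ∑ j, p j ≤ n * (n + 1) / 2 := by
    simpa using sum_le_of_mem_parkingFns hp
  have hgauss : ((n * (n + 1) / 2 : ℕ) : ℚ) = n * (n + 1) / 2 := by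
    rw [Nat.cast_div (Nat.even_mul_succ_self n).two_dvd two_ne_zero]
    push_cast
    ring
  have hsym : ∑ p ∈ parkingFns (Fin n), ((∑ j, p j : ℕ) : ℚ) =
      n * ∑ p ∈ parkingFns (Fin n), (p i : ℚ) := by
    exact_mod_cast (sum_parkingFns_sum_apply i).trans (by rw [Fintype.card_fin])
  rw [sum_congr rfl fun p hp => Nat.cast_sub (hbound p hp), sum_sub_distrib, sum_const,
    nsmul_eq_mul, hgauss, hsym]

/-- The expectation of the area statistic over a uniformly random parking function of
length `n` equals `-n/2 + W_{n+1}/2`. -/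
theorem expectation_area_parking (n : ℕ) :
    (∑ p ∈ pfFinset 1 n, ((n * (n + 1) / 2 - ∑ i, p i : ℕ) : ℚ)) /
        ((n : ℚ) + 1) ^ (n - 1) =
      -(n : ℚ) / 2 + Wq (n + 1) / 2 := by
  rw [pfFinset_one_eq]
  rcases n with _ | N
  · simp [Wq]
  have hcard : (#(parkingFns (Fin (N + 1))) : ℚ) = (N + 2) ^ N := by
    rw [card_parkingFns]
    push_cast
    ring_nf
  have hfirst : 2 * ∑ p ∈ parkingFns (Fin (N + 1)), (p 0 : ℚ) +
      ∑ k ∈ range (N + 1), (N.descFactorial k : ℚ) * (N + 2) ^ (N - k) = (N + 3) * (N + 2) ^ N := by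
    exact_mod_cast two_mul_sum_parkingFns_apply_zero_add N
  rw [sum_area_parkingFns 0, hcard, div_eq_iff (by positivity), show N + 1 + 1 = N + 2 from rfl]
  push_cast
  linear_combination (-(N + 1 : ℚ) / 2) * hfirst - Wq_mul_pow N / 2
end
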